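/- Let θ_{xy} be the homogeneous q-difference operator θ_{xy} f(x,y) := (f(q^{-1}x, y) − f(x, qy))/(q^{-1}x − y). Then for all k ≤ n, θ_{xy}^k p_n(y,x) = (−1)^k ((q;q)_n/(q;q)_{n−k}) p_{n−k}(y,x), where p_m(y,x) := ∏_{j=0}^{m−1}(y − q^j x). -/

import Mathlib

/-! Since `p_n(qy, x) = qⁿ p_n(y, q⁻¹x)` and `p_{n+1}(y, q⁻¹x) = (y - q⁻¹x) p_n(y, x)`, one
application of `θ_{xy}` lowers the degree: `θ_{xy} p_{n+1}(y,x) = -(1 - q^{n+1}) p_n(y,x)`. The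
`k`-th iterate at `(x, y)` only samples points `(q^{-i}x, q^j y)`, which stay off the lines
`x = q^m y`, so the rule applies `k` times, and `∏_{j<k} (1 - q^{n-j}) = (q;q)_n / (q;q)_{n-k}`. -/

open Finset

noncomputable def qPoch (q a : ℂ) (n : ℕ) : ℂ := ∏ j ∈ Finset.range n, (1 - a * q ^ j)

noncomputable def qPochInf (q a : ℂ) : ℂ := ∏' j : ℕ, (1 - a * q ^ j)

noncomputable def cauchyP (q x y : ℂ) (n : ℕ) : ℂ := ∏ j ∈ Finset.range n, (x - q ^ j * y)

noncomputable def qBinom (q : ℂ) (n k : ℕ) : ℂ := qPoch q q n / (qPoch q q k * qPoch q q (n - k))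

noncomputable def qDeriv (q : ℂ) (f : ℂ → ℂ) : ℂ → ℂ := fun x => (f x - f (q * x)) / x

noncomputable def qTheta (q : ℂ) (f : ℂ → ℂ → ℂ) : ℂ → ℂ → ℂ :=
  fun x y => (f (q⁻¹ * x) y - f x (q * y)) / (q⁻¹ * x - y)

/-- `₁Φ₁(a; 0; q, z)` -/
noncomputable def phi11 (q a z : ℂ) : ℂ :=
  ∑' m : ℕ, (-1) ^ m * q ^ m.choose 2 * qPoch q a m * z ^ m / qPoch q q m

/-- generalized Cauchy polynomials `p_n(x,y,a)` -/
noncomputable def genCauchy (q a x y : ℂ) (n : ℕ) : ℂ :=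
  ∑ k ∈ Finset.range (n + 1),
    qBinom q n k * (-1) ^ k * q ^ k.choose 2 * qPoch q a k * x ^ (n - k) * y ^ k

/-- generalized Hahn polynomials `h_n(x,y,a,b|q)` -/
noncomputable def hahn (q x y a b : ℂ) (n : ℕ) : ℂ :=
  ∑ k ∈ Finset.range (n + 1),
    qBinom q n k * (-1) ^ k * q ^ k.choose 2 * b ^ k * qPoch q a k * cauchyP q y x (n - k)

section

variable {q : ℂ}

lemma qTheta_apply_congr {f g : ℂ → ℂ → ℂ} {x y : ℂ} (h₁ : f (q⁻¹ * x) y = g (q⁻¹ * x) y)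
    (h₂ : f x (q * y) = g x (q * y)) : qTheta q f x y = qTheta q g x y := by
  simp only [qTheta, h₁, h₂]

lemma qTheta_const_mul (c : ℂ) (f : ℂ → ℂ → ℂ) (x y : ℂ) :
    qTheta q (fun u v => c * f u v) x y = c * qTheta q f x y := by
  simp only [qTheta, ← mul_sub, mul_div_assoc]

lemma cauchyP_mul_left (hq : q ≠ 0) (x y : ℂ) (m : ℕ) :
    cauchyP q (q * y) x m = q ^ m * cauchyP q y (q⁻¹ * x) m := by
  calc ∏ j ∈ range m, (q * y - q ^ j * x)
      = ∏ j ∈ range m, q * (y - q ^ j * (q⁻¹ * x)) := prod_congr rfl fun j _ => by field_simp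
    _ = _ := by rw [prod_mul_distrib, prod_const, card_range, cauchyP]

lemma cauchyP_inv_mul_succ (hq : q ≠ 0) (x y : ℂ) (m : ℕ) :
    cauchyP q y (q⁻¹ * x) (m + 1) = (y - q⁻¹ * x) * cauchyP q y x m := by
  rw [cauchyP, prod_range_succ', mul_comm, pow_zero, one_mul]
  congr 1
  exact prod_congr rfl fun j _ => by field_simp; ring

lemma qTheta_cauchyP_succ (hq : q ≠ 0) {x y : ℂ} (hxy : q⁻¹ * x ≠ y) (m : ℕ) :
    qTheta q (fun u v => cauchyP q v u (m + 1)) x y = -(1 - q ^ (m + 1)) * cauchyP q y x m := by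
  rw [qTheta, cauchyP_mul_left hq, ← one_sub_mul, cauchyP_inv_mul_succ hq,
    div_eq_iff (sub_ne_zero.mpr hxy)]
  ring

lemma inv_mul_ne_zpow_mul (hq : q ≠ 0) {x y : ℂ} (hxy : ∀ m : ℤ, x ≠ q ^ m * y) (m : ℤ) :
    q⁻¹ * x ≠ q ^ m * y := by
  intro h
  apply hxy (m + 1)
  rw [zpow_add_one₀ hq, mul_right_comm, ← h]
  field_simp

lemma ne_zpow_mul_mul (hq : q ≠ 0) {x y : ℂ} (hxy : ∀ m : ℤ, x ≠ q ^ m * y) (m : ℤ) :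
    x ≠ q ^ m * (q * y) := by
  rw [← mul_assoc, ← zpow_add_one₀ hq]
  exact hxy (m + 1)

theorem qTheta_iterate_cauchyP (hq : q ≠ 0) {n k : ℕ} (hk : k ≤ n) {x y : ℂ}
    (hxy : ∀ m : ℤ, x ≠ q ^ m * y) :
    (qTheta q)^[k] (fun u v => cauchyP q v u n) x y =
      (-1) ^ k * (∏ j ∈ range k, (1 - q ^ (n - j))) * cauchyP q y x (n - k) := by
  induction k generalizing x y with
  | zero => simp
  | succ k ih =>
    obtain ⟨m, hm⟩ : ∃ m, n - k = m + 1 := ⟨n - (k + 1), by omega⟩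
    have hnext : n - (k + 1) = m := by omega
    have hstep : qTheta q ((qTheta q)^[k] (fun u v => cauchyP q v u n)) x y =
        qTheta q (fun u v => (-1) ^ k * (∏ j ∈ range k, (1 - q ^ (n - j))) *
          cauchyP q v u (m + 1)) x y := by
      refine qTheta_apply_congr ?_ ?_
      · rw [ih (by omega) (inv_mul_ne_zpow_mul hq hxy), hm]
      · rw [ih (by omega) (ne_zpow_mul_mul hq hxy), hm]
    have hxy' : q⁻¹ * x ≠ y := by simpa using inv_mul_ne_zpow_mul hq hxy 0
    rw [Function.iterate_succ_apply', hstep, qTheta_const_mul, qTheta_cauchyP_succ hq hxy',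
      prod_range_succ, hm, hnext]
    ring

lemma qPoch_succ (a : ℂ) (n : ℕ) : qPoch q a (n + 1) = qPoch q a n * (1 - a * q ^ n) :=
  prod_range_succ _ _

lemma qPoch_self_eq_mul_prod {n k : ℕ} (hk : k ≤ n) :
    qPoch q q n = qPoch q q (n - k) * ∏ j ∈ range k, (1 - q ^ (n - j)) := by
  induction k with
  | zero => simp
  | succ k ih =>
    obtain ⟨m, hm⟩ : ∃ m, n - k = m + 1 := ⟨n - (k + 1), by omega⟩
    rw [ih (by omega), prod_range_succ, hm, qPoch_succ, show n - (k + 1) = m by omega]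
    ring

lemma qPoch_self_ne_zero (hq : ‖q‖ < 1) (n : ℕ) : qPoch q q n ≠ 0 := by
  refine prod_ne_zero_iff.mpr fun j _ => sub_ne_zero.mpr fun h => ?_
  have : ‖q * q ^ j‖ < 1 := by
    rw [← pow_succ', norm_pow]
    exact pow_lt_one₀ (norm_nonneg q) hq j.succ_ne_zero
  rw [← h, norm_one] at this
  exact this.false

end

theorem stmt14 (q : ℝ) (hq0 : 0 < q) (hq1 : q < 1) (n k : ℕ) (hk : k ≤ n) (x y : ℂ)
    (hxy : ∀ m : ℤ, x ≠ (q : ℂ) ^ m * y) :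
    (qTheta (q : ℂ))^[k] (fun u v => cauchyP (q : ℂ) v u n) x y =
      (-1) ^ k * (qPoch (q : ℂ) (q : ℂ) n / qPoch (q : ℂ) (q : ℂ) (n - k)) *
        cauchyP (q : ℂ) y x (n - k) := by
  have hq : (q : ℂ) ≠ 0 := by exact_mod_cast hq0.ne'
  have hnorm : ‖(q : ℂ)‖ < 1 := by rwa [Complex.norm_real, Real.norm_of_nonneg hq0.le]
  rw [qTheta_iterate_cauchyP hq hk hxy, qPoch_self_eq_mul_prod hk,
    mul_div_cancel_left₀ _ (qPoch_self_ne_zero hnorm (n - k))]
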